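/- arXiv:1810.02735 — 4 statements merged into one kernel-verified Lean document; each statement's English description precedes it below -/
import Mathlib

section
/- Let w = (w_i)_{i≥1} be positive reals with partial sums s_i = w_1+⋯+w_i. Construct (T̃_n, ũ_n) recursively: T̃_1 = {ν_1}, ũ_1 = ν_1; given (T̃_{n-1}, ũ_{n-1}), let B_n be Bernoulli(w_n/s_n) and U_{n-1} be an independent index with P(U_{n-1}=i)=w_i/s_{n-1}; if B_n=1 attach ν_n as a child of ũ_{n-1} and set ũ_n = ν_n, and if B_n=0 attach ν_n as a child of ν_{U_{n-1}} and set ũ_n = ũ_{n-1}. Then for every increasing tree t on n vertices and every j ≤ n, P(T̃_n = t, ũ_n = ν_j) = (∏_{i=2}^n w_{π_t(i)}/s_{i-1}) · (w_j/s_n). In particular T̃_n is distributed as the n-node w-WRRT and, given T̃_n, ũ_n is a weight-proportional random node of T̃_n. -/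
open MeasureTheory ProbabilityTheory Finset

/-!
The event `{T̃_n = t, ũ_n = ν_j}` is determined by `B_k` (`k ≤ n`) and `U_k` (`k < n`), hence is
independent of `(B_{n+1}, U_n)`. Adding `ν_{n+1}` to `t` gives the event
`{T̃_n = t, ũ_n = ν_{π(n+1)}} ∩ {B_{n+1} = 1}` when `j = n + 1`, and
`{T̃_n = t, ũ_n = ν_j} ∩ {B_{n+1} = 0, U_n = π(n+1)}` when `j ≤ n`. In the second case the factor
`P(B_{n+1} = 0) = s_n / s_{n+1}` turns `w_j / s_n` into `w_j / s_{n+1}`, and induction on `n` gives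
the product formula.
-/

section Independence

variable {Ω ι : Type*} {β : ι → Type*} [mβ : ∀ i, MeasurableSpace (β i)] {f : ∀ i, Ω → β i}

abbrev sigmaOf (f : ∀ i, Ω → β i) (S : Set ι) : MeasurableSpace Ω :=
  ⨆ i ∈ S, (mβ i).comap (f i)

lemma measurable_sigmaOf_of_mem {S : Set ι} {i : ι} (hi : i ∈ S) :
    Measurable[sigmaOf f S] (f i) :=
  Measurable.of_comap_le (le_iSup₂ (f := fun i (_ : i ∈ S) => (mβ i).comap (f i)) i hi)

lemma sigmaOf_le [mΩ : MeasurableSpace Ω] (hmeas : ∀ i, Measurable (f i)) (S : Set ι) :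
    sigmaOf f S ≤ mΩ :=
  iSup₂_le fun i _ => (hmeas i).comap_le

lemma measure_inter_eq_mul_of_disjoint [MeasurableSpace Ω] {μ : Measure Ω}
    (hmeas : ∀ i, Measurable (f i)) (hindep : iIndepFun f μ) {S T : Set ι} (hST : Disjoint S T)
    {A C : Set Ω} (hA : MeasurableSet[sigmaOf f S] A) (hC : MeasurableSet[sigmaOf f T] C) :
    μ (A ∩ C) = μ A * μ C :=
  (Indep_iff _ _ μ).1
    (indep_iSup_of_disjoint (fun i => (hmeas i).comap_le) hindep.iIndep hST) A C hA hC

end Independence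

section PartialSums

variable {w s : ℕ → ℝ}

lemma partialSum_pos (hw : ∀ i, 1 ≤ i → 0 < w i) (hs : ∀ i, s i = ∑ j ∈ Icc 1 i, w j) {n : ℕ}
    (hn : 1 ≤ n) : 0 < s n := by
  rw [hs]
  exact sum_pos (fun i hi => hw i (mem_Icc.1 hi).1) ⟨1, mem_Icc.2 ⟨le_rfl, hn⟩⟩

lemma partialSum_add_one (hs : ∀ i, s i = ∑ j ∈ Icc 1 i, w j) (n : ℕ) :
    s (n + 1) = s n + w (n + 1) := by
  rw [hs, hs, sum_Icc_succ_top (by omega : 1 ≤ n + 1)]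

lemma one_sub_div_partialSum (hw : ∀ i, 1 ≤ i → 0 < w i) (hs : ∀ i, s i = ∑ j ∈ Icc 1 i, w j)
    (n : ℕ) : 1 - w (n + 1) / s (n + 1) = s n / s (n + 1) := by
  have hpos := partialSum_pos hw hs (by omega : 1 ≤ n + 1)
  rw [eq_div_iff hpos.ne', sub_mul, div_mul_cancel₀ _ hpos.ne', partialSum_add_one hs]
  ring

end PartialSums

lemma forall_mem_Icc_add_one {P : ℕ → Prop} {a n : ℕ} (h : a ≤ n + 1) :
    (∀ m ∈ Icc a (n + 1), P m) ↔ (∀ m ∈ Icc a n, P m) ∧ P (n + 1) := by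
  have hIcc := insert_Icc_right_eq_Icc_succ (a := a) (b := n) (by simpa using h)
  rw [Order.succ_eq_add_one] at hIcc
  rw [← hIcc, forall_mem_insert, and_comm]

section Coupling

variable {Ω : Type*}

def CouplingStep (B : ℕ → Ω → Bool) (U par u : ℕ → Ω → ℕ) : Prop :=
  ∀ ω, ∀ m, 2 ≤ m →
    (B m ω = true → par m ω = u (m - 1) ω ∧ u m ω = m) ∧
    (B m ω = false → par m ω = U (m - 1) ω ∧ u m ω = u (m - 1) ω)

def treeEvent (par u : ℕ → Ω → ℕ) (π : ℕ → ℕ) (n j : ℕ) : Set Ω :=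
  {ω | (∀ m ∈ Icc 2 n, par m ω = π m) ∧ u n ω = j}

/-- `Sum.inl k` indexes `B_k` and `Sum.inr k` indexes `U_k`; these are the variables on which
`(T̃_n, ũ_n)` depends. -/
def revealed (n : ℕ) : Set (ℕ ⊕ ℕ) := {i | Sum.elim (· ≤ n) (· < n) i}

variable {B : ℕ → Ω → Bool} {U par u : ℕ → Ω → ℕ} {f : ℕ ⊕ ℕ → Ω → ℕ}

lemma disjoint_revealed (n : ℕ) : Disjoint (revealed n) {Sum.inl (n + 1), Sum.inr n} := by
  simp only [Set.disjoint_left, revealed, Set.mem_ofPred_eq, Set.mem_insert_iff,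
    Set.mem_singleton_iff]
  rintro (k | k) hk (h | h) <;> simp_all

lemma treeEvent_one (hu1 : ∀ ω, u 1 ω = 1) (π : ℕ → ℕ) : treeEvent par u π 1 1 = Set.univ := by
  ext ω
  simp [treeEvent, hu1]

namespace CouplingStep

lemma par_eq (h : CouplingStep B U par u) {m : ℕ} (hm : 2 ≤ m) :
    par m = fun ω => if B m ω then u (m - 1) ω else U (m - 1) ω := by
  funext ω
  cases hB : B m ω
  · simp [((h ω m hm).2 hB).1]
  · simp [((h ω m hm).1 hB).1]

lemma u_add_one_eq (h : CouplingStep B U par u) {m : ℕ} (hm : 1 ≤ m) :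
    u (m + 1) = fun ω => if B (m + 1) ω then m + 1 else u m ω := by
  funext ω
  cases hB : B (m + 1) ω
  · simp [((h ω (m + 1) (by omega)).2 hB).2]
  · simp [((h ω (m + 1) (by omega)).1 hB).2]

lemma u_le (h : CouplingStep B U par u) (hu1 : ∀ ω, u 1 ω = 1) {m : ℕ} (hm : 1 ≤ m) (ω : Ω) :
    u m ω ≤ m := by
  induction m, hm using Nat.le_induction with
  | base => simp [hu1]
  | succ m hm ih =>
    rw [h.u_add_one_eq hm]
    dsimp only
    split <;> omega

lemma treeEvent_add_one_self (h : CouplingStep B U par u) (hu1 : ∀ ω, u 1 ω = 1) (π : ℕ → ℕ)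
    {n : ℕ} (hn : 1 ≤ n) :
    treeEvent par u π (n + 1) (n + 1) =
      treeEvent par u π n (π (n + 1)) ∩ {ω | B (n + 1) ω = true} := by
  ext ω
  have hun := h.u_le hu1 hn ω
  simp only [treeEvent, Set.mem_inter_iff, Set.mem_ofPred_eq,
    forall_mem_Icc_add_one (by omega : 2 ≤ n + 1), h.par_eq (by omega : 2 ≤ n + 1),
    h.u_add_one_eq hn, Nat.add_sub_cancel]
  cases B (n + 1) ω
  · simp only [Bool.false_eq_true, ↓reduceIte, and_false, iff_false, not_and]
    omega
  · simp

lemma treeEvent_add_one_of_le (h : CouplingStep B U par u) (π : ℕ → ℕ) {n j : ℕ} (hn : 1 ≤ n)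
    (hjn : j ≤ n) :
    treeEvent par u π (n + 1) j =
      treeEvent par u π n j ∩ ({ω | B (n + 1) ω = false} ∩ {ω | U n ω = π (n + 1)}) := by
  ext ω
  simp only [treeEvent, Set.mem_inter_iff, Set.mem_ofPred_eq,
    forall_mem_Icc_add_one (by omega : 2 ≤ n + 1), h.par_eq (by omega : 2 ≤ n + 1),
    h.u_add_one_eq hn, Nat.add_sub_cancel]
  cases B (n + 1) ω
  · simp [and_right_comm]
  · simp only [↓reduceIte, Bool.true_eq_false, false_and, and_false, iff_false, not_and]
    omega

end CouplingStep

variable {S : Set (ℕ ⊕ ℕ)}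

lemma measurable_B (hfB : ∀ i, f (Sum.inl i) = fun ω => if B i ω then 1 else 0) {k : ℕ}
    (hk : Sum.inl k ∈ S) : Measurable[sigmaOf f S] (B k) := by
  have hB : B k = (fun x => decide (x = 1)) ∘ f (Sum.inl k) := by
    funext ω
    cases hb : B k ω <;> simp [hfB, hb]
  rw [hB]
  exact measurable_from_top.comp (measurable_sigmaOf_of_mem hk)

lemma measurable_U (hfU : ∀ i, f (Sum.inr i) = U i) {k : ℕ} (hk : Sum.inr k ∈ S) :
    Measurable[sigmaOf f S] (U k) :=
  hfU k ▸ measurable_sigmaOf_of_mem hk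

lemma measurableSet_B_eq (hfB : ∀ i, f (Sum.inl i) = fun ω => if B i ω then 1 else 0) {k : ℕ}
    (hk : Sum.inl k ∈ S) (b : Bool) : MeasurableSet[sigmaOf f S] {ω | B k ω = b} :=
  measurable_B hfB hk (measurableSet_singleton b)

lemma measurableSet_U_eq (hfU : ∀ i, f (Sum.inr i) = U i) {k : ℕ} (hk : Sum.inr k ∈ S) (p : ℕ) :
    MeasurableSet[sigmaOf f S] {ω | U k ω = p} :=
  measurable_U hfU hk (measurableSet_singleton p)

lemma measurable_u (h : CouplingStep B U par u) (hu1 : ∀ ω, u 1 ω = 1)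
    (hfB : ∀ i, f (Sum.inl i) = fun ω => if B i ω then 1 else 0) {n m : ℕ} (hm : 1 ≤ m)
    (hmn : m ≤ n) : Measurable[sigmaOf f (revealed n)] (u m) := by
  induction m, hm using Nat.le_induction with
  | base =>
    rw [show u 1 = fun _ => 1 from funext hu1]
    exact measurable_const
  | succ m hm ih =>
    rw [h.u_add_one_eq hm]
    exact Measurable.ite (measurableSet_B_eq hfB (by simpa [revealed] using hmn) true)
      measurable_const (ih (by omega))

lemma measurable_par (h : CouplingStep B U par u) (hu1 : ∀ ω, u 1 ω = 1)
    (hfB : ∀ i, f (Sum.inl i) = fun ω => if B i ω then 1 else 0) (hfU : ∀ i, f (Sum.inr i) = U i)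
    {n m : ℕ} (hm : 2 ≤ m) (hmn : m ≤ n) : Measurable[sigmaOf f (revealed n)] (par m) := by
  rw [h.par_eq hm]
  exact Measurable.ite (measurableSet_B_eq hfB (by simpa [revealed] using hmn) true)
    (measurable_u h hu1 hfB (by omega) (by omega))
    (measurable_U hfU (by simp only [revealed, Set.mem_ofPred_eq, Sum.elim_inr]; omega))

lemma measurableSet_treeEvent (h : CouplingStep B U par u) (hu1 : ∀ ω, u 1 ω = 1)
    (hfB : ∀ i, f (Sum.inl i) = fun ω => if B i ω then 1 else 0) (hfU : ∀ i, f (Sum.inr i) = U i)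
    (π : ℕ → ℕ) {n : ℕ} (hn : 1 ≤ n) (j : ℕ) :
    MeasurableSet[sigmaOf f (revealed n)] (treeEvent par u π n j) := by
  simp only [treeEvent, Set.ofPred_and, Set.ofPred_forall]
  refine .inter (.iInter fun m => .iInter fun hm => ?_) ?_
  · rw [mem_Icc] at hm
    exact measurable_par h hu1 hfB hfU hm.1 hm.2 (measurableSet_singleton (π m))
  · exact measurable_u h hu1 hfB hn le_rfl (measurableSet_singleton j)

section

variable [MeasurableSpace Ω] {μ : Measure Ω}

lemma measure_treeEvent_inter (hmeas : ∀ i, Measurable (f i)) (hindep : iIndepFun f μ)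
    (h : CouplingStep B U par u) (hu1 : ∀ ω, u 1 ω = 1)
    (hfB : ∀ i, f (Sum.inl i) = fun ω => if B i ω then 1 else 0) (hfU : ∀ i, f (Sum.inr i) = U i)
    (π : ℕ → ℕ) {n : ℕ} (hn : 1 ≤ n) (j : ℕ) {C : Set Ω}
    (hC : MeasurableSet[sigmaOf f {Sum.inl (n + 1), Sum.inr n}] C) :
    μ (treeEvent par u π n j ∩ C) = μ (treeEvent par u π n j) * μ C :=
  measure_inter_eq_mul_of_disjoint hmeas hindep (disjoint_revealed n)
    (measurableSet_treeEvent h hu1 hfB hfU π hn j) hC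

lemma measure_treeEvent_add_one_self (hmeas : ∀ i, Measurable (f i)) (hindep : iIndepFun f μ)
    (h : CouplingStep B U par u) (hu1 : ∀ ω, u 1 ω = 1)
    (hfB : ∀ i, f (Sum.inl i) = fun ω => if B i ω then 1 else 0) (hfU : ∀ i, f (Sum.inr i) = U i)
    (π : ℕ → ℕ) {n : ℕ} (hn : 1 ≤ n) :
    μ (treeEvent par u π (n + 1) (n + 1)) =
      μ (treeEvent par u π n (π (n + 1))) * μ {ω | B (n + 1) ω = true} := by
  rw [h.treeEvent_add_one_self hu1 π hn]
  exact measure_treeEvent_inter hmeas hindep h hu1 hfB hfU π hn _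
    (measurableSet_B_eq hfB (by simp) true)

lemma measure_treeEvent_add_one_of_le (hmeas : ∀ i, Measurable (f i)) (hindep : iIndepFun f μ)
    (h : CouplingStep B U par u) (hu1 : ∀ ω, u 1 ω = 1)
    (hfB : ∀ i, f (Sum.inl i) = fun ω => if B i ω then 1 else 0) (hfU : ∀ i, f (Sum.inr i) = U i)
    (π : ℕ → ℕ) {n j : ℕ} (hn : 1 ≤ n) (hjn : j ≤ n) :
    μ (treeEvent par u π (n + 1) j) = μ (treeEvent par u π n j) *
      (μ {ω | B (n + 1) ω = false} * μ {ω | U n ω = π (n + 1)}) := by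
  have hB := measurableSet_B_eq hfB (S := {Sum.inl (n + 1)}) rfl false
  have hU := measurableSet_U_eq hfU (S := {Sum.inr n}) rfl (π (n + 1))
  rw [h.treeEvent_add_one_of_le π hn hjn,
    measure_treeEvent_inter hmeas hindep h hu1 hfB hfU π hn j
      ((measurableSet_B_eq hfB (by simp) false).inter (measurableSet_U_eq hfU (by simp) _)),
    measure_inter_eq_mul_of_disjoint hmeas hindep (by simp) hB hU]

end

end Coupling

lemma measure_B_eq_false {Ω : Type*} [MeasurableSpace Ω] {μ : Measure Ω} [IsProbabilityMeasure μ]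
    {w s : ℕ → ℝ} (hw : ∀ i, 1 ≤ i → 0 < w i) (hs : ∀ i, s i = ∑ j ∈ Icc 1 i, w j)
    {B : ℕ → Ω → Bool} {n : ℕ} (hB : MeasurableSet {ω | B (n + 1) ω = true})
    (hBlaw : μ {ω | B (n + 1) ω = true} = ENNReal.ofReal (w (n + 1) / s (n + 1))) :
    μ {ω | B (n + 1) ω = false} = ENNReal.ofReal (s n / s (n + 1)) := by
  have hcompl : {ω | B (n + 1) ω = false} = {ω | B (n + 1) ω = true}ᶜ := by
    ext ω
    simp
  have hnonneg : 0 ≤ w (n + 1) / s (n + 1) :=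
    div_nonneg (hw _ (by omega)).le (partialSum_pos hw hs (by omega)).le
  rw [hcompl, prob_compl_eq_one_sub hB, hBlaw, ← ENNReal.ofReal_one,
    ← ENNReal.ofReal_sub _ hnonneg, one_sub_div_partialSum hw hs]
theorem wrrt_one_node_coupling_general
    {Ω : Type*} [MeasurableSpace Ω] (μ : Measure Ω) [IsProbabilityMeasure μ]
    (w : ℕ → ℝ) (hw : ∀ i, 1 ≤ i → 0 < w i)
    (s : ℕ → ℝ) (hs : ∀ i, s i = ∑ j ∈ Finset.Icc 1 i, w j)
    (B : ℕ → Ω → Bool) (U : ℕ → Ω → ℕ)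
    (f : ℕ ⊕ ℕ → Ω → ℕ)
    (hfB : ∀ i, f (Sum.inl i) = fun ω => if B i ω then 1 else 0)
    (hfU : ∀ i, f (Sum.inr i) = U i)
    (hmeas : ∀ j, Measurable (f j))
    (hindep : iIndepFun f μ)
    (hBlaw : ∀ i, 1 ≤ i → μ {ω | B i ω = true} = ENNReal.ofReal (w i / s i))
    (hUlaw : ∀ m, 1 ≤ m → ∀ i, 1 ≤ i → i ≤ m →
      μ {ω | U m ω = i} = ENNReal.ofReal (w i / s m))
    (par u : ℕ → Ω → ℕ)
    (hu1 : ∀ ω, u 1 ω = 1)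
    (hrec : ∀ ω, ∀ m, 2 ≤ m →
      (B m ω = true → par m ω = u (m - 1) ω ∧ u m ω = m) ∧
      (B m ω = false → par m ω = U (m - 1) ω ∧ u m ω = u (m - 1) ω))
    (n j : ℕ) (hn : 1 ≤ n) (hj : 1 ≤ j) (hjn : j ≤ n)
    (π : ℕ → ℕ) (hπ : ∀ m, 2 ≤ m → m ≤ n → 1 ≤ π m ∧ π m < m) :
    μ {ω | (∀ m ∈ Finset.Icc 2 n, par m ω = π m) ∧ u n ω = j}
      = (∏ m ∈ Finset.Icc 2 n, ENNReal.ofReal (w (π m) / s (m - 1)))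
        * ENNReal.ofReal (w j / s n) := by
  have hstep : CouplingStep B U par u := hrec
  change μ (treeEvent par u π n j) = _
  induction n, hn using Nat.le_induction generalizing j with
  | base =>
    obtain rfl : j = 1 := by omega
    have hs1 : s 1 = w 1 := by simp [hs]
    rw [treeEvent_one hu1, measure_univ, Icc_eq_empty (by omega), prod_empty, hs1,
      div_self (hw 1 le_rfl).ne', ENNReal.ofReal_one, one_mul]
  | succ n hn ih =>
    have hπ' : ∀ m, 2 ≤ m → m ≤ n → 1 ≤ π m ∧ π m < m := fun m h1 h2 => hπ m h1 (by omega)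
    obtain ⟨hπ1, hπlt⟩ := hπ (n + 1) (by omega) le_rfl
    rw [prod_Icc_succ_top (by omega : 2 ≤ n + 1), Nat.add_sub_cancel]
    rcases (by omega : j = n + 1 ∨ j ≤ n) with rfl | hjn
    · rw [measure_treeEvent_add_one_self hmeas hindep hstep hu1 hfB hfU π hn,
        ih _ hπ1 (by omega) hπ', hBlaw _ (by omega)]
    · have hsn := partialSum_pos hw hs hn
      rw [measure_treeEvent_add_one_of_le hmeas hindep hstep hu1 hfB hfU π hn hjn,
        ih j hj hjn hπ', hUlaw n hn _ hπ1 (by omega),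
        measure_B_eq_false hw hs
          (sigmaOf_le hmeas _ _ (measurableSet_B_eq hfB (Set.mem_univ _) true))
          (hBlaw _ (by omega)),
        ← div_mul_div_cancel₀ (a := w j) (c := s (n + 1)) hsn.ne',
        ENNReal.ofReal_mul (div_nonneg (hw j hj).le hsn.le)]
      ring

/-- **Coupled construction of the WRRT together with a weight-proportional node.**
`par m` is the index of the parent of node `ν_m` (for `m ≥ 2`) and `u m` is the index of the
distinguished node `ũ_m`.  The construction uses independent Bernoulli variables
`B m` (parameter `w m / s m`) and independent indices `U m` with `P(U m = i) = w i / s m`: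
if `B m = 1` then `ν_m` attaches to `ũ_{m-1}` and `ũ_m = ν_m`; if `B m = 0` then `ν_m`
attaches to `ν_{U_{m-1}}` and `ũ_m = ũ_{m-1}`.  Then for every increasing tree `t` on `n`
vertices with parent map `π` and every `1 ≤ j ≤ n`,
`P(T̃_n = t, ũ_n = ν_j) = (∏_{m=2}^n w (π m)/s (m-1)) * (w j / s n)`. -/
theorem wrrt_one_node_coupling
    {Ω : Type*} [MeasurableSpace Ω] (μ : Measure Ω) [IsProbabilityMeasure μ]
    (w : ℕ → ℝ) (hw : ∀ i, 1 ≤ i → 0 < w i)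
    (s : ℕ → ℝ) (hs : ∀ i, s i = ∑ j ∈ Finset.Icc 1 i, w j)
    (B : ℕ → Ω → Bool) (U : ℕ → Ω → ℕ)
    (f : ℕ ⊕ ℕ → Ω → ℕ)
    (hfB : ∀ i, f (Sum.inl i) = fun ω => if B i ω then 1 else 0)
    (hfU : ∀ i, f (Sum.inr i) = U i)
    (hmeas : ∀ j, Measurable (f j))
    (hindep : iIndepFun f μ)
    (hBlaw : ∀ i, 1 ≤ i → μ {ω | B i ω = true} = ENNReal.ofReal (w i / s i))
    (hUlaw : ∀ m, 1 ≤ m → ∀ i, 1 ≤ i → i ≤ m →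
      μ {ω | U m ω = i} = ENNReal.ofReal (w i / s m))
    (hUrange : ∀ m, 1 ≤ m → ∀ ω, 1 ≤ U m ω ∧ U m ω ≤ m)
    (par u : ℕ → Ω → ℕ)
    (hu1 : ∀ ω, u 1 ω = 1)
    (hrec : ∀ ω, ∀ m, 2 ≤ m →
      (B m ω = true → par m ω = u (m - 1) ω ∧ u m ω = m) ∧
      (B m ω = false → par m ω = U (m - 1) ω ∧ u m ω = u (m - 1) ω))
    (n j : ℕ) (hn : 1 ≤ n) (hj : 1 ≤ j) (hjn : j ≤ n)
    (π : ℕ → ℕ) (hπ : ∀ m, 2 ≤ m → m ≤ n → 1 ≤ π m ∧ π m < m) :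
    μ {ω | (∀ m ∈ Finset.Icc 2 n, par m ω = π m) ∧ u n ω = j}
      = (∏ m ∈ Finset.Icc 2 n, ENNReal.ofReal (w (π m) / s (m - 1)))
        * ENNReal.ofReal (w j / s n) :=
  wrrt_one_node_coupling_general μ w hw s hs B U f hfB hfU hmeas hindep hBlaw hUlaw par u hu1 hrec n
    j hn hj hjn π hπ
end

section
/- Let (L_i)_{i≥1} be i.i.d. positive random variables with E[L^{2a}] < ∞ for some a > 0, and T_i = L_1 + ⋯ + L_i. Then for any real b and any ℓ > 1, the series Σ_{i=1}^∞ L_{i+1}^a (log T_i)^b / T_i^ℓ converges almost surely. -/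
open MeasureTheory ProbabilityTheory Finset Filter Asymptotics
open scoped Topology

/-!
The strong law of large numbers, applied to the bounded truncations `min L_i 1`, gives almost
surely `T_i ≥ c i` eventually, for some `c > 0`. Fixing `1 < ℓ' < ℓ`, this makes
`(log T_i)^b / T_i^ℓ = O(i^(-ℓ'))`, and `L^a ≤ 1 + L^(2a)` reduces the claim to the almost sure
convergence of `∑ (1 + L_{i+1}^(2a)) i^(-ℓ')`, a series of finite expectation.
-/

lemma rpow_le_one_add_rpow_two_mul {x : ℝ} (hx : 0 ≤ x) (a : ℝ) : x ^ a ≤ 1 + x ^ (2 * a) := by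
  rw [mul_comm, Real.rpow_mul hx, Real.rpow_two]
  nlinarith [sq_nonneg (x ^ a - 1)]

lemma sum_Icc_one_eq_sum_range (f : ℕ → ℝ) (n : ℕ) :
    ∑ j ∈ Icc 1 n, f j = ∑ j ∈ range n, f (j + 1) := by
  rw [range_eq_Ico, sum_Ico_add' f 0 n 1]
  rfl

lemma eventually_mul_le_of_tendsto_div {u : ℕ → ℝ} {m c : ℝ}
    (hu : Tendsto (fun n => u n / n) atTop (𝓝 m)) (hc : c < m) :
    ∀ᶠ n in atTop, c * n ≤ u n := by
  filter_upwards [hu.eventually (eventually_gt_nhds hc), eventually_gt_atTop 0] with n hn hn0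
  exact (lt_div_iff₀ (Nat.cast_pos.2 hn0)).1 hn |>.le

lemma tendsto_atTop_of_eventually_mul_le {T : ℕ → ℝ} {c : ℝ} (hc : 0 < c)
    (hT : ∀ᶠ n in atTop, c * n ≤ T n) : Tendsto T atTop atTop :=
  tendsto_atTop_mono' atTop hT (tendsto_natCast_atTop_atTop.const_mul_atTop hc)

lemma isBigO_log_rpow_div_rpow_of_eventually_mul_le {T : ℕ → ℝ} {c ℓ ℓ' : ℝ} (b : ℝ)
    (hc : 0 < c) (hT : ∀ᶠ n in atTop, c * n ≤ T n) (hℓ' : 0 < ℓ') (hℓ : ℓ' < ℓ) :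
    (fun n => Real.log (T n) ^ b / T n ^ ℓ) =O[atTop] fun n : ℕ => (n : ℝ) ^ (-ℓ') := by
  have hreal : (fun x : ℝ => Real.log x ^ b / x ^ ℓ) =O[atTop] fun x => x ^ (-ℓ') := by
    refine ((isLittleO_log_rpow_rpow_atTop b (sub_pos.2 hℓ)).isBigO.mul
      (isBigO_refl (fun x : ℝ => x ^ (-ℓ)) atTop)).congr' ?_ ?_
    · filter_upwards [eventually_ge_atTop 0] with x hx
      rw [Real.rpow_neg hx, div_eq_mul_inv]
    · filter_upwards [eventually_gt_atTop 0] with x hx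
      rw [← Real.rpow_add hx]
      ring_nf
  have hlinear : (fun n => T n ^ (-ℓ')) =O[atTop] fun n : ℕ => (n : ℝ) ^ (-ℓ') := by
    refine IsBigO.of_bound (c ^ (-ℓ')) ?_
    filter_upwards [hT, eventually_gt_atTop 0] with n hn hn0
    have hcn : 0 < c * n := mul_pos hc (Nat.cast_pos.2 hn0)
    rw [Real.norm_of_nonneg (Real.rpow_nonneg (hcn.le.trans hn) _),
      Real.norm_of_nonneg (Real.rpow_nonneg n.cast_nonneg _), ← Real.mul_rpow hc.le n.cast_nonneg]
    exact Real.rpow_le_rpow_of_nonpos hcn hn (neg_nonpos.2 hℓ'.le)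
  exact (hreal.comp_tendsto (tendsto_atTop_of_eventually_mul_le hc hT)).trans hlinear

section Probability

variable {Ω : Type*} [MeasurableSpace Ω] {μ : Measure Ω}

lemma ae_summable_norm_mul_of_identDistrib {Y : ℕ → Ω → ℝ} {w : ℕ → ℝ}
    (hident : ∀ i, IdentDistrib (Y i) (Y 0) μ μ) (hint : Integrable (Y 0) μ) (hw : Summable w) :
    ∀ᵐ ω ∂μ, Summable fun i => ‖w i * Y i ω‖ := by
  refine summable_norm_of_tsum_eLpNorm_ne_top le_rfl
    (fun i => (hident i).aemeasurable_fst.aestronglyMeasurable.const_mul (w i)) ?_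
  have heLp : ∀ i, eLpNorm (fun ω => w i * Y i ω) 1 μ = ‖w i‖ₑ * eLpNorm (Y 0) 1 μ := fun i => by
    rw [← (hident i).eLpNorm_eq]
    exact eLpNorm_const_smul (w i) (Y i) 1 μ
  simp only [heLp, ENNReal.tsum_mul_right]
  exact ENNReal.mul_ne_top (tsum_enorm_ne_top_iff_summable_norm.2 hw.norm)
    (memLp_one_iff_integrable.2 hint).eLpNorm_ne_top

lemma exists_ae_eventually_mul_le_sum_range [IsProbabilityMeasure μ] {X : ℕ → Ω → ℝ}
    (hindep : Pairwise fun i j => IndepFun (X i) (X j) μ)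
    (hident : ∀ i, IdentDistrib (X i) (X 0) μ μ) (hpos : ∀ i ω, 0 < X i ω) :
    ∃ c > 0, ∀ᵐ ω ∂μ, ∀ᶠ n in atTop, c * n ≤ ∑ i ∈ range n, X i ω := by
  set Y : ℕ → Ω → ℝ := fun i ω => min (X i ω) 1
  have hmin : Measurable fun x : ℝ => min x 1 := measurable_id.min measurable_const
  have hY0 : Integrable (Y 0) μ := by
    refine Integrable.of_bound ((hident 0).aemeasurable_fst.min aemeasurable_const
      |>.aestronglyMeasurable) 1 (Eventually.of_forall fun ω => ?_)
    rw [Real.norm_of_nonneg (le_min (hpos 0 ω).le zero_le_one)]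
    exact min_le_right _ _
  have hmean : 0 < ∫ ω, Y 0 ω ∂μ := by
    have hsupp : Function.support (Y 0) = Set.univ :=
      Set.eq_univ_of_forall fun ω => (lt_min (hpos 0 ω) one_pos).ne'
    rw [integral_pos_iff_support_of_nonneg (fun ω => le_min (hpos 0 ω).le zero_le_one) hY0, hsupp]
    simp
  refine ⟨(∫ ω, Y 0 ω ∂μ) / 2, half_pos hmean, ?_⟩
  filter_upwards [strong_law_ae_real Y hY0 (fun i j hij => (hindep hij).comp hmin hmin)
    (fun i => (hident i).comp hmin)] with ω hω
  filter_upwards [eventually_mul_le_of_tendsto_div hω (half_lt_self hmean)] with n hn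
  exact hn.trans (sum_le_sum fun i _ => min_le_left _ _)

end Probability

theorem sum_renewal_summable_general
    {Ω : Type*} [MeasurableSpace Ω] (μ : Measure Ω) [IsProbabilityMeasure μ]
    (L : ℕ → Ω → ℝ)
    (hindep : iIndepFun L μ)
    (hident : ∀ i, IdentDistrib (L i) (L 1) μ μ)
    (hpos : ∀ i ω, 0 < L i ω)
    (a : ℝ)
    (hmom : Integrable (fun ω => L 1 ω ^ (2 * a)) μ)
    (b ℓ : ℝ) (hℓ : 1 < ℓ) :
    ∀ᵐ ω ∂μ, Summable (fun i : ℕ =>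
      if 1 < ∑ j ∈ Finset.Icc 1 i, L j ω then
        L (i + 1) ω ^ a * Real.log (∑ j ∈ Finset.Icc 1 i, L j ω) ^ b
          / (∑ j ∈ Finset.Icc 1 i, L j ω) ^ ℓ
      else 0) := by
  obtain ⟨ℓ', hℓ'1, hℓ'ℓ⟩ := exists_between hℓ
  have hzeta : Summable fun i : ℕ => (i : ℝ) ^ (-ℓ') := Real.summable_nat_rpow.2 (by linarith)
  have hpow : Measurable fun x : ℝ => x ^ (2 * a) := by fun_prop
  obtain ⟨c, hc, hgrowth⟩ := exists_ae_eventually_mul_le_sum_range (X := fun j => L (j + 1))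
    (fun i j hij => hindep.indepFun (by omega)) (fun i => hident (i + 1)) (fun i => hpos (i + 1))
  have hweighted := ae_summable_norm_mul_of_identDistrib
    (Y := fun i ω => L (i + 1) ω ^ (2 * a)) (w := fun i : ℕ => (i : ℝ) ^ (-ℓ'))
    (fun i => (hident (i + 1)).comp hpow) hmom hzeta
  filter_upwards [hgrowth, hweighted] with ω hgrowthω hweightedω
  set T := fun i => ∑ j ∈ Icc 1 i, L j ω
  have hTgrowth : ∀ᶠ n in atTop, c * n ≤ T n := by
    simpa only [T, sum_Icc_one_eq_sum_range] using hgrowthω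
  have hTtop := tendsto_atTop_of_eventually_mul_le hc hTgrowth
  refine summable_of_isBigO_nat (hzeta.add hweightedω.of_norm) ?_
  calc _ =ᶠ[atTop] fun i => L (i + 1) ω ^ a * (Real.log (T i) ^ b / T i ^ ℓ) := by
        filter_upwards [hTtop.eventually_gt_atTop 1] with i hi
        rw [if_pos hi, mul_div_assoc]
    _ =O[atTop] fun i => (1 + L (i + 1) ω ^ (2 * a)) * (i : ℝ) ^ (-ℓ') := by
        refine IsBigO.mul (IsBigO.of_bound 1 (Eventually.of_forall fun i => ?_))
          (isBigO_log_rpow_div_rpow_of_eventually_mul_le b hc hTgrowth (by linarith) hℓ'ℓ)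
        have hL := (hpos (i + 1) ω).le
        rw [one_mul, Real.norm_of_nonneg (Real.rpow_nonneg hL a),
          Real.norm_of_nonneg (by positivity)]
        exact rpow_le_one_add_rpow_two_mul hL a
    _ = _ := by ext i; ring

/-- **Lemma 5.2, convergent case.**  For i.i.d. positive `(L_i)` with `E[L^{2a}] < ∞`,
for any real `b` and any `ℓ > 1`, the series
`∑_i L_{i+1}^a (log T_i)^b / T_i^ℓ` (restricted to indices with `T_i > 1`)
converges almost surely. -/
theorem sum_renewal_summable
    {Ω : Type*} [MeasurableSpace Ω] (μ : Measure Ω) [IsProbabilityMeasure μ]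
    (L : ℕ → Ω → ℝ)
    (hmeas : ∀ i, Measurable (L i))
    (hindep : iIndepFun L μ)
    (hident : ∀ i, IdentDistrib (L i) (L 1) μ μ)
    (hpos : ∀ i ω, 0 < L i ω)
    (a : ℝ) (ha : 0 < a)
    (hmom : Integrable (fun ω => L 1 ω ^ (2 * a)) μ)
    (hint : Integrable (L 1) μ)
    (b ℓ : ℝ) (hℓ : 1 < ℓ) :
    ∀ᵐ ω ∂μ, Summable (fun i : ℕ =>
      if 1 < ∑ j ∈ Finset.Icc 1 i, L j ω then
        L (i + 1) ω ^ a * Real.log (∑ j ∈ Finset.Icc 1 i, L j ω) ^ b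
          / (∑ j ∈ Finset.Icc 1 i, L j ω) ^ ℓ
      else 0) :=
  sum_renewal_summable_general μ L hindep hident hpos a hmom b ℓ hℓ
end

section
/- Let μ(x) = (α/x)(log x)^{α−1} e^{β (log x)^α} for x > 1, with α > 0 and β ≥ 0. For T > e, L > 0 with L/T ≤ 1 and L (log T)^{max(α,1)−1}/T ≤ 1, and integer ℓ ≥ 2, the quantity R^{(ℓ)} = ∫_0^L u^{ℓ−1} (μ(T+u)/μ(T)) du satisfies |R^{(ℓ)} − L^ℓ/ℓ| ≤ c · L^{ℓ+1} (log T)^{max(α,1)−1}/T, where c > 0 depends only on α and β. -/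
open MeasureTheory Real

/-- The memory kernel `μ₁(x) = (α/x)(log x)^{α-1} e^{β (log x)^α}`. -/
noncomputable def mu1 (α β x : ℝ) : ℝ :=
  (α / x) * Real.log x ^ (α - 1) * Real.exp (β * Real.log x ^ α)

/-- The kernel-weighted moment `R^{(ℓ)} = ∫_0^L u^{ℓ-1} μ₁(T+u)/μ₁(T) du`. -/
noncomputable def Rmom1 (α β T L : ℝ) (ℓ : ℕ) : ℝ :=
  ∫ u in (0 : ℝ)..L, u ^ ((ℓ : ℝ) - 1) * (mu1 α β (T + u) / mu1 α β T)

/-!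
On `[T, 2T]` the logarithmic derivative of `μ₁` is `O((log T)^{max(α,1)-1} / T)`, so by the mean
value theorem `μ₁(T+u)/μ₁(T) = exp t` with `|t| ≤ K L (log T)^{max(α,1)-1} / T ≤ K` for `u ≤ L`.
Hence `|μ₁(T+u)/μ₁(T) - 1| ≤ K e^K L (log T)^{max(α,1)-1} / T`, and integrating this against
`u^{ℓ-1}` over `[0, L]` costs a factor `L^ℓ`.
-/

lemma abs_exp_sub_one_le_abs_mul_exp_abs (t : ℝ) : |exp t - 1| ≤ |t| * exp |t| := by
  rcases le_or_gt 0 t with ht | ht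
  · rw [abs_of_nonneg ht, abs_of_nonneg (sub_nonneg.mpr (one_le_exp ht))]
    have h : (1 - t) * exp t ≤ 1 := by
      calc (1 - t) * exp t ≤ exp (-t) * exp t := by
            gcongr; linarith [add_one_le_exp (-t)]
        _ = 1 := by rw [← exp_add, neg_add_cancel, exp_zero]
    linarith
  · rw [abs_of_neg ht, abs_of_nonpos (sub_nonpos.mpr (exp_le_one_iff.mpr ht.le))]
    nlinarith [add_one_le_exp t, one_le_exp (neg_nonneg.mpr ht.le)]

lemma rpow_sub_one_le_two_rpow_mul_rpow {α y z : ℝ} (hα : 0 ≤ α) (hy : 1 ≤ y) (hyz : y ≤ 2 * z) :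
    y ^ (α - 1) ≤ 2 ^ α * z ^ (max α 1 - 1) := by
  rcases le_total α 1 with h | h
  · rw [max_eq_right h, sub_self, rpow_zero, mul_one]
    exact (rpow_le_one_of_one_le_of_nonpos hy (by linarith)).trans (one_le_rpow one_le_two hα)
  · rw [max_eq_left h]
    calc y ^ (α - 1) ≤ (2 * z) ^ (α - 1) := rpow_le_rpow (by linarith) hyz (by linarith)
      _ = 2 ^ (α - 1) * z ^ (α - 1) := mul_rpow zero_le_two (by linarith)
      _ ≤ 2 ^ α * z ^ (α - 1) := by
          gcongr
          · exact rpow_nonneg (by linarith) _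
          · exact one_le_two
          · linarith

lemma log_le_two_mul_log {x T : ℝ} (hT : exp 1 ≤ T) (hx : 0 < x) (hxT : x ≤ 2 * T) :
    log x ≤ 2 * log T := by
  have hT0 : 0 < T := (exp_pos 1).trans_le hT
  have hlogT : 1 ≤ log T := (le_log_iff_exp_le hT0).mpr hT
  calc log x ≤ log (2 * T) := log_le_log hx hxT
    _ = log 2 + log T := log_mul two_ne_zero hT0.ne'
    _ ≤ 2 * log T := by linarith [log_two_lt_d9]

noncomputable def logMu1 (α β x : ℝ) : ℝ :=
  log α - log x + (α - 1) * log (log x) + β * log x ^ α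

noncomputable def logMu1Deriv (α β x : ℝ) : ℝ :=
  x⁻¹ * (-1 + (α - 1) * (log x)⁻¹ + β * α * log x ^ (α - 1))

noncomputable def logMu1DerivConst (α β : ℝ) : ℝ :=
  1 + |α - 1| + β * α * 2 ^ α

section Mu1

variable {α β : ℝ}

lemma logMu1DerivConst_pos (hα : 0 < α) (hβ : 0 ≤ β) : 0 < logMu1DerivConst α β := by
  unfold logMu1DerivConst; positivity

lemma mu1_eq_exp_logMu1 (hα : 0 < α) {x : ℝ} (hx : 1 < x) :
    mu1 α β x = exp (logMu1 α β x) := by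
  rw [mu1, logMu1, exp_add, exp_add, exp_sub, exp_log hα, exp_log (by linarith),
    rpow_def_of_pos (log_pos hx), mul_comm (log (log x))]

lemma hasDerivAt_logMu1 {x : ℝ} (hx : 1 < x) :
    HasDerivAt (logMu1 α β) (logMu1Deriv α β x) x := by
  have hx0 : x ≠ 0 := by linarith
  have hlog0 : log x ≠ 0 := (log_pos hx).ne'
  have hlog := hasDerivAt_log hx0
  have hloglog := (hasDerivAt_log hlog0).comp x hlog
  have hpow := hlog.rpow_const (p := α) (Or.inl hlog0)
  exact ((((hasDerivAt_const x (log α)).sub hlog).add (hloglog.const_mul (α - 1))).add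
    (hpow.const_mul β)).congr_deriv (by rw [logMu1Deriv]; ring)

lemma continuousAt_mu1 (hα : 0 < α) {x : ℝ} (hx : 1 < x) : ContinuousAt (mu1 α β) x := by
  have heq : (fun y => exp (logMu1 α β y)) =ᶠ[nhds x] mu1 α β :=
    Filter.eventually_of_mem (Ioi_mem_nhds hx) fun y hy => (mu1_eq_exp_logMu1 hα hy).symm
  exact ((hasDerivAt_logMu1 hx).continuousAt.rexp).congr heq

lemma abs_logMu1Deriv_le (hα : 0 < α) (hβ : 0 ≤ β) {x T : ℝ} (hT : exp 1 ≤ T) (hTx : T ≤ x)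
    (hxT : x ≤ 2 * T) :
    |logMu1Deriv α β x| ≤ logMu1DerivConst α β * (log T ^ (max α 1 - 1) / T) := by
  have hT0 : 0 < T := (exp_pos 1).trans_le hT
  have hlogT : 1 ≤ log T := (le_log_iff_exp_le hT0).mpr hT
  have hlogx : 1 ≤ log x := hlogT.trans (log_le_log hT0 hTx)
  have hpow : log x ^ (α - 1) ≤ 2 ^ α * log T ^ (max α 1 - 1) :=
    rpow_sub_one_le_two_rpow_mul_rpow hα.le hlogx (log_le_two_mul_log hT (by linarith) hxT)
  have hlogT_pow : 1 ≤ log T ^ (max α 1 - 1) :=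
    one_le_rpow hlogT (by linarith [le_max_right α 1])
  have hinv : (log x)⁻¹ ≤ 1 := inv_le_one_of_one_le₀ hlogx
  have hbracket : |-1 + (α - 1) * (log x)⁻¹ + β * α * log x ^ (α - 1)|
      ≤ logMu1DerivConst α β * log T ^ (max α 1 - 1) := by
    calc |-1 + (α - 1) * (log x)⁻¹ + β * α * log x ^ (α - 1)|
        ≤ 1 + |α - 1| * 1 + β * α * (2 ^ α * log T ^ (max α 1 - 1)) := by
          refine (abs_add_le _ _).trans (add_le_add ((abs_add_le _ _).trans ?_) ?_)
          · rw [abs_neg, abs_one, abs_mul,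
              abs_of_pos (inv_pos.mpr (by linarith : (0 : ℝ) < log x))]
            gcongr
          · rw [abs_of_nonneg (by positivity)]
            gcongr
      _ ≤ logMu1DerivConst α β * log T ^ (max α 1 - 1) := by
          unfold logMu1DerivConst
          nlinarith [mul_nonneg (add_nonneg zero_le_one (abs_nonneg (α - 1)))
            (sub_nonneg.mpr hlogT_pow)]
  calc |logMu1Deriv α β x|
      = x⁻¹ * |-1 + (α - 1) * (log x)⁻¹ + β * α * log x ^ (α - 1)| := by
        rw [logMu1Deriv, abs_mul, abs_of_pos (inv_pos.mpr (by linarith))]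
    _ ≤ T⁻¹ * (logMu1DerivConst α β * log T ^ (max α 1 - 1)) :=
        mul_le_mul (inv_anti₀ hT0 hTx) hbracket (abs_nonneg _) (inv_pos.mpr hT0).le
    _ = logMu1DerivConst α β * (log T ^ (max α 1 - 1) / T) := by ring

lemma abs_logMu1_add_sub_le (hα : 0 < α) (hβ : 0 ≤ β) {T u : ℝ} (hT : exp 1 ≤ T) (hu : 0 ≤ u)
    (huT : u ≤ T) :
    |logMu1 α β (T + u) - logMu1 α β T|
      ≤ logMu1DerivConst α β * (log T ^ (max α 1 - 1) / T) * u := by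
  have hT1 : 1 < T := lt_of_lt_of_le (by simp) hT
  have h := Convex.norm_image_sub_le_of_norm_hasDerivWithin_le (s := Set.Icc T (T + u))
    (fun x hx => (hasDerivAt_logMu1 (hT1.trans_le hx.1)).hasDerivWithinAt)
    (fun x hx => (abs_logMu1Deriv_le hα hβ hT hx.1 (by linarith [hx.2])))
    (convex_Icc _ _) ⟨le_rfl, by linarith⟩ ⟨by linarith, le_rfl⟩
  simpa [abs_of_nonneg hu] using h

lemma abs_mu1_add_div_sub_one_le (hα : 0 < α) (hβ : 0 ≤ β) {T L u : ℝ} (hT : exp 1 ≤ T)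
    (hu : u ∈ Set.Icc 0 L) (hLT : L ≤ T) (hsmall : L * log T ^ (max α 1 - 1) / T ≤ 1) :
    |mu1 α β (T + u) / mu1 α β T - 1|
      ≤ logMu1DerivConst α β * exp (logMu1DerivConst α β) * (L * log T ^ (max α 1 - 1) / T) := by
  set K := logMu1DerivConst α β
  set δ := L * log T ^ (max α 1 - 1) / T
  have hT1 : 1 < T := lt_of_lt_of_le (by simp) hT
  have hK : 0 < K := logMu1DerivConst_pos hα hβ
  have ht : |logMu1 α β (T + u) - logMu1 α β T| ≤ K * δ := by
    calc _ ≤ K * (log T ^ (max α 1 - 1) / T) * u :=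
          abs_logMu1_add_sub_le hα hβ hT hu.1 (hu.2.trans hLT)
      _ ≤ K * (log T ^ (max α 1 - 1) / T) * L := by
          have : 0 ≤ log T ^ (max α 1 - 1) := rpow_nonneg (log_nonneg hT1.le) _
          gcongr
          exact hu.2
      _ = K * δ := by ring
  have htK : |logMu1 α β (T + u) - logMu1 α β T| ≤ K :=
    ht.trans (mul_le_of_le_one_right hK.le hsmall)
  rw [mu1_eq_exp_logMu1 hα (by linarith [hu.1]), mu1_eq_exp_logMu1 hα hT1, ← exp_sub]
  calc _ ≤ _ := abs_exp_sub_one_le_abs_mul_exp_abs _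
    _ ≤ K * δ * exp K := by gcongr; exact (abs_nonneg _).trans ht
    _ = K * exp K * δ := by ring

end Mu1

lemma abs_integral_rpow_sub_one_mul_sub_le {s L ε : ℝ} {f : ℝ → ℝ} (hs : 1 ≤ s) (hL : 0 ≤ L)
    (hf : ContinuousOn f (Set.Icc 0 L)) (hfε : ∀ u ∈ Set.Icc 0 L, |f u - 1| ≤ ε) :
    |(∫ u in (0 : ℝ)..L, u ^ (s - 1) * f u) - L ^ s / s| ≤ ε * L ^ s := by
  have hpow : IntervalIntegrable (fun u : ℝ => u ^ (s - 1)) volume 0 L :=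
    intervalIntegral.intervalIntegrable_rpow' (by linarith)
  have hmoment : ∫ u in (0 : ℝ)..L, u ^ (s - 1) = L ^ s / s := by
    rw [integral_rpow (Or.inl (by linarith)), sub_add_cancel, zero_rpow (by linarith), sub_zero]
  rw [← hmoment, ← intervalIntegral.integral_sub
    (hpow.mul_continuousOn (by rwa [Set.uIcc_of_le hL])) hpow]
  have hbound : ∀ u ∈ Set.uIoc 0 L, ‖u ^ (s - 1) * f u - u ^ (s - 1)‖ ≤ L ^ (s - 1) * ε := by
    intro u hu
    rw [Set.uIoc_of_le hL] at hu
    rw [← mul_sub_one, norm_mul, norm_of_nonneg (rpow_nonneg hu.1.le _)]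
    exact mul_le_mul (rpow_le_rpow hu.1.le hu.2 (by linarith)) (hfε u ⟨hu.1.le, hu.2⟩)
      (norm_nonneg _) (rpow_nonneg hL _)
  have h := intervalIntegral.norm_integral_le_of_norm_le_const hbound
  rw [← Real.norm_eq_abs]
  refine h.trans_eq ?_
  conv_rhs => rw [← sub_add_cancel s 1, rpow_add_one' hL (by linarith)]
  rw [sub_zero, abs_of_nonneg hL]
  ring

/-- **Lemma 5.1, case `μ = μ₁` (deterministic core).**
For `T > e`, `0 < L`, `L/T ≤ 1` and `L (log T)^{max(α,1)-1}/T ≤ 1`, and any integer `ℓ ≥ 2`,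
`|R^{(ℓ)} - L^ℓ/ℓ| ≤ c L^{ℓ+1} (log T)^{max(α,1)-1}/T` for a constant `c > 0` depending only
on `α` and `β`. -/
theorem moment_estimate_mu1 (α β : ℝ) (hα : 0 < α) (hβ : 0 ≤ β) :
    ∃ c : ℝ, 0 < c ∧ ∀ (T L : ℝ) (ℓ : ℕ), Real.exp 1 < T → 0 < L → L / T ≤ 1 →
      L * Real.log T ^ (max α 1 - 1) / T ≤ 1 → 2 ≤ ℓ →
      |Rmom1 α β T L ℓ - L ^ (ℓ : ℝ) / ℓ|
        ≤ c * L ^ ((ℓ : ℝ) + 1) * Real.log T ^ (max α 1 - 1) / T := by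
  have hK := logMu1DerivConst_pos hα hβ
  refine ⟨logMu1DerivConst α β * exp (logMu1DerivConst α β), by positivity, ?_⟩
  intro T L ℓ hT hL hLT hsmall hℓ
  have hT0 : 0 < T := (exp_pos 1).trans hT
  have hratio : ContinuousOn (fun u => mu1 α β (T + u) / mu1 α β T) (Set.Icc 0 L) :=
    fun u hu => ((continuousAt_mu1 (x := T + u) hα (by linarith [hu.1, add_one_le_exp 1])).comp
      (continuousAt_const.add continuousAt_id)).continuousWithinAt.div_const _
  have hℓ1 : (1 : ℝ) ≤ ℓ := by exact_mod_cast (by omega : 1 ≤ ℓ)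
  calc |Rmom1 α β T L ℓ - L ^ (ℓ : ℝ) / ℓ|
      ≤ logMu1DerivConst α β * exp (logMu1DerivConst α β) * (L * log T ^ (max α 1 - 1) / T)
          * L ^ (ℓ : ℝ) :=
        abs_integral_rpow_sub_one_mul_sub_le hℓ1 hL.le hratio fun u hu =>
          abs_mu1_add_div_sub_one_le hα hβ hT.le hu ((div_le_one hT0).mp hLT) hsmall
    _ = _ := by rw [rpow_add_one hL.ne']; ring
end

section
/- Let (w_i)_{i≥1} be positive reals with Σ_{i=1}^∞ (w_i/s_i)² < ∞, where s_i = w_1+⋯+w_i. Let u_n and v_n be two independent weight-proportional random nodes of the n-node w-WRRT T_n (coupled consistently over n via the two-node coupling). Then the height |u_n ∧ v_n| of the last common ancestor u_n ∧ v_n of u_n and v_n converges in distribution, as n → ∞, to an almost surely finite random variable. -/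
/-!
The set of common ancestors of `u_n` and `v_n` can change only at a step `n` with
`B_n = B'_n = true`: otherwise at most one of the two nodes moves, to the new node `n` whose
parent is its old position, and `n` is not an ancestor of the other node. These double successes
have probability `(w_n / s_n) ^ 2`, which is summable, so by Borel–Cantelli there are almost surely
only finitely many. Hence `|u_n ∧ v_n|` is almost surely eventually constant, and almost sure
convergence gives convergence in distribution to its limit.
-/

open MeasureTheory ProbabilityTheory Finset Filter Topology
open scoped Classical

/-- `i` is a (non-strict) ancestor of `j` in the tree with parent map `p`. -/
def isAnc (p : ℕ → ℕ) (i j : ℕ) : Prop := ∃ k : ℕ, p^[k] j = i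

lemma isAnc_iff_eq_or_isAnc_parent (p : ℕ → ℕ) (i m : ℕ) :
    isAnc p i m ↔ i = m ∨ isAnc p i (p m) := by
  constructor
  · rintro ⟨_ | k, hk⟩
    · exact Or.inl hk.symm
    · exact Or.inr ⟨k, by rwa [Function.iterate_succ_apply] at hk⟩
  · rintro (rfl | ⟨k, hk⟩)
    · exact ⟨0, rfl⟩
    · exact ⟨k + 1, by rwa [Function.iterate_succ_apply]⟩

lemma isAnc.one_le_and_le {p : ℕ → ℕ} (hp : ∀ m, 1 ≤ m → 1 ≤ p m ∧ p m ≤ m) {i j : ℕ}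
    (hj : 1 ≤ j) (h : isAnc p i j) : 1 ≤ i ∧ i ≤ j := by
  obtain ⟨k, rfl⟩ := h
  induction k generalizing j with
  | zero => exact ⟨hj, le_rfl⟩
  | succ k ih =>
    rw [Function.iterate_succ_apply]
    exact (ih (hp j hj).1).imp_right (·.trans (hp j hj).2)

noncomputable def commonAnc (p : ℕ → ℕ) (n a b : ℕ) : Finset ℕ :=
  (Icc 1 n).filter fun i => isAnc p i a ∧ isAnc p i b

lemma commonAnc_comm (p : ℕ → ℕ) (n a b : ℕ) : commonAnc p n a b = commonAnc p n b a := by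
  ext i
  simp only [commonAnc, mem_filter, and_comm]

lemma commonAnc_succ_of_le {p : ℕ → ℕ} (hp : ∀ m, 1 ≤ m → 1 ≤ p m ∧ p m ≤ m) {n a : ℕ}
    (b : ℕ) (ha : 1 ≤ a) (han : a ≤ n) :
    commonAnc p (n + 1) a b = commonAnc p n a b := by
  ext i
  simp only [commonAnc, mem_filter, mem_Icc]
  constructor
  · rintro ⟨⟨hi, -⟩, hia, hib⟩
    exact ⟨⟨hi, (hia.one_le_and_le hp ha).2.trans han⟩, hia, hib⟩
  · rintro ⟨⟨hi, hin⟩, hia, hib⟩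
    exact ⟨⟨hi, hin.trans n.le_succ⟩, hia, hib⟩

lemma commonAnc_succ_of_parent_eq {p : ℕ → ℕ} (hp : ∀ m, 1 ≤ m → 1 ≤ p m ∧ p m ≤ m)
    {n a b : ℕ} (hpa : p (n + 1) = a) (hb : 1 ≤ b) (hbn : b ≤ n) :
    commonAnc p (n + 1) (n + 1) b = commonAnc p n a b := by
  ext i
  simp only [commonAnc, mem_filter, mem_Icc, isAnc_iff_eq_or_isAnc_parent p i (n + 1), hpa]
  constructor
  · rintro ⟨⟨hi, -⟩, hia | hia, hib⟩
    · have := (hib.one_le_and_le hp hb).2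
      omega
    · exact ⟨⟨hi, (hib.one_le_and_le hp hb).2.trans hbn⟩, hia, hib⟩
  · rintro ⟨⟨hi, hin⟩, hia, hib⟩
    exact ⟨⟨hi, hin.trans n.le_succ⟩, Or.inr hia, hib⟩

/-- One sample path of the coupling: `p` is the parent map of the tree and `u n`, `v n` are the
two marked nodes of `T_n`. -/
structure IsTwoNodePath (b b' : ℕ → Bool) (U p u v : ℕ → ℕ) : Prop where
  U_mem : ∀ m, 1 ≤ m → 1 ≤ U m ∧ U m ≤ m
  parent_one : p 1 = 1
  u_one : u 1 = 1
  v_one : v 1 = 1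
  step : ∀ m, 2 ≤ m →
    (b m = false → b' m = false → p m = U (m - 1) ∧ u m = u (m - 1) ∧ v m = v (m - 1)) ∧
    (b m = true → b' m = false → p m = u (m - 1) ∧ u m = m ∧ v m = v (m - 1)) ∧
    (b m = false → b' m = true → p m = v (m - 1) ∧ u m = u (m - 1) ∧ v m = m) ∧
    (b m = true → b' m = true → p m = u (m - 1) ∧ u m = m ∧ v m = m)

namespace IsTwoNodePath

variable {b b' : ℕ → Bool} {U p u v : ℕ → ℕ}

lemma step_succ (h : IsTwoNodePath b b' U p u v) {n : ℕ} (hn : 1 ≤ n) :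
    (b (n + 1) = false → b' (n + 1) = false →
      p (n + 1) = U n ∧ u (n + 1) = u n ∧ v (n + 1) = v n) ∧
    (b (n + 1) = true → b' (n + 1) = false →
      p (n + 1) = u n ∧ u (n + 1) = n + 1 ∧ v (n + 1) = v n) ∧
    (b (n + 1) = false → b' (n + 1) = true →
      p (n + 1) = v n ∧ u (n + 1) = u n ∧ v (n + 1) = n + 1) ∧
    (b (n + 1) = true → b' (n + 1) = true →
      p (n + 1) = u n ∧ u (n + 1) = n + 1 ∧ v (n + 1) = n + 1) :=
  h.step (n + 1) (by omega)

lemma nodes_mem (h : IsTwoNodePath b b' U p u v) {n : ℕ} (hn : 1 ≤ n) :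
    (1 ≤ u n ∧ u n ≤ n) ∧ (1 ≤ v n ∧ v n ≤ n) := by
  induction n, hn using Nat.le_induction with
  | base => simp [h.u_one, h.v_one]
  | succ n hn ih =>
    obtain ⟨h00, h10, h01, h11⟩ := h.step_succ hn
    cases hb : b (n + 1) <;> cases hb' : b' (n + 1)
    · obtain ⟨-, hu, hv⟩ := h00 hb hb'; omega
    · obtain ⟨-, hu, hv⟩ := h01 hb hb'; omega
    · obtain ⟨-, hu, hv⟩ := h10 hb hb'; omega
    · obtain ⟨-, hu, hv⟩ := h11 hb hb'; omega

lemma parent_mem (h : IsTwoNodePath b b' U p u v) {m : ℕ} (hm : 1 ≤ m) : 1 ≤ p m ∧ p m ≤ m := by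
  obtain rfl | ⟨n, hn, rfl⟩ : m = 1 ∨ ∃ n, 1 ≤ n ∧ m = n + 1 := by
    rcases m with _ | _ | n <;> simp_all
  · simp [h.parent_one]
  obtain ⟨h00, h10, h01, h11⟩ := h.step_succ hn
  have hU := h.U_mem n hn
  have ⟨hu, hv⟩ := h.nodes_mem hn
  cases hb : b (n + 1) <;> cases hb' : b' (n + 1)
  · obtain ⟨hp, -⟩ := h00 hb hb'; omega
  · obtain ⟨hp, -⟩ := h01 hb hb'; omega
  · obtain ⟨hp, -⟩ := h10 hb hb'; omega
  · obtain ⟨hp, -⟩ := h11 hb hb'; omega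

lemma commonAnc_succ (h : IsTwoNodePath b b' U p u v) {n : ℕ} (hn : 1 ≤ n)
    (hno : ¬(b (n + 1) = true ∧ b' (n + 1) = true)) :
    commonAnc p (n + 1) (u (n + 1)) (v (n + 1)) = commonAnc p n (u n) (v n) := by
  have hp := fun m => h.parent_mem (m := m)
  obtain ⟨⟨hu1, hun⟩, hv1, hvn⟩ := h.nodes_mem hn
  obtain ⟨h00, h10, h01, -⟩ := h.step_succ hn
  cases hb : b (n + 1) <;> cases hb' : b' (n + 1)
  · obtain ⟨-, hu, hv⟩ := h00 hb hb'
    rw [hu, hv, commonAnc_succ_of_le hp _ hu1 hun]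
  · obtain ⟨hpv, hu, hv⟩ := h01 hb hb'
    rw [hu, hv, commonAnc_comm, commonAnc_succ_of_parent_eq hp hpv hu1 hun, commonAnc_comm]
  · obtain ⟨hpu, hu, hv⟩ := h10 hb hb'
    rw [hu, hv, commonAnc_succ_of_parent_eq hp hpu hv1 hvn]
  · exact absurd ⟨hb, hb'⟩ hno

lemma commonAnc_eventually_const (h : IsTwoNodePath b b' U p u v)
    (hfin : ∀ᶠ m in atTop, ¬(b m = true ∧ b' m = true)) :
    ∃ c, ∀ᶠ n in atTop, commonAnc p n (u n) (v n) = c := by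
  obtain ⟨N, hN⟩ := eventually_atTop.mp hfin
  refine ⟨commonAnc p (max N 1) (u (max N 1)) (v (max N 1)), eventually_atTop.mpr ⟨max N 1, ?_⟩⟩
  intro n hn
  induction n, hn using Nat.le_induction with
  | base => rfl
  | succ n hn ih => rw [h.commonAnc_succ (by omega) (hN _ (by omega)), ih]

end IsTwoNodePath

section Probability

variable {Ω : Type*} [MeasurableSpace Ω]

lemma measurable_iterate_apply {p : ℕ → Ω → ℕ} (hp : ∀ m, Measurable (p m)) (k : ℕ)
    {g : Ω → ℕ} (hg : Measurable g) : Measurable fun ω => (fun m => p m ω)^[k] (g ω) := by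
  induction k generalizing g with
  | zero => exact hg
  | succ k ih =>
    simp only [Function.iterate_succ_apply]
    exact ih ((measurable_from_prod_countable_left (f := fun q : Ω × ℕ => p q.2 q.1) hp).comp
      (measurable_id.prodMk hg))

lemma measurableSet_isAnc {p : ℕ → Ω → ℕ} (hp : ∀ m, Measurable (p m)) {g : Ω → ℕ}
    (hg : Measurable g) (i : ℕ) : MeasurableSet {ω | isAnc (fun m => p m ω) i (g ω)} := by
  simp only [isAnc, Set.ofPred_exists]
  exact .iUnion fun k => measurable_iterate_apply hp k hg (measurableSet_singleton i)

lemma measurable_card_commonAnc {p : ℕ → Ω → ℕ} (hp : ∀ m, Measurable (p m)) (n : ℕ)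
    {a b : Ω → ℕ} (ha : Measurable a) (hb : Measurable b) :
    Measurable fun ω => (commonAnc (fun m => p m ω) n (a ω) (b ω)).card := by
  simp only [commonAnc, card_filter]
  exact Finset.measurable_sum _ fun i _ => Measurable.ite
    ((measurableSet_isAnc hp ha i).inter (measurableSet_isAnc hp hb i))
    measurable_const measurable_const

lemma ae_eventually_notMem_of_le_ofReal {μ : Measure Ω} {G : ℕ → Set Ω} {g : ℕ → ℝ}
    (hg : Summable g) (hG : ∀ᶠ i in atTop, μ (G i) ≤ ENNReal.ofReal (g i)) :
    ∀ᵐ ω ∂μ, ∀ᶠ i in atTop, ω ∉ G i := by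
  obtain ⟨N, hN⟩ := eventually_atTop.mp hG
  have hfin : ∑' i, μ (G (i + N)) ≠ ⊤ :=
    ne_top_of_le_ne_top
      (ENNReal.tsum_coe_ne_top_iff_summable.mpr ((summable_nat_add_iff N).mpr hg).toNNReal)
      (ENNReal.tsum_le_tsum fun i => hN _ le_add_self)
  filter_upwards [ae_eventually_notMem hfin] with ω hω
  rw [← map_add_atTop_eq_nat N]
  exact hω

lemma ENNReal.ofReal_mul_self_le (r : ℝ) :
    ENNReal.ofReal r * ENNReal.ofReal r ≤ ENNReal.ofReal (r ^ 2) := by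
  rcases le_total 0 r with hr | hr
  · rw [ENNReal.ofReal_pow hr, sq]
  · simp [ENNReal.ofReal_of_nonpos hr]

lemma ProbabilityTheory.IndepFun.measure_setOf_and_eq_mul {μ : Measure Ω} {X Y : Ω → Bool}
    (h : IndepFun (fun ω => if X ω then 1 else 0 : Ω → ℕ)
      (fun ω => if Y ω then 1 else 0 : Ω → ℕ) μ) :
    μ {ω | X ω = true ∧ Y ω = true} = μ {ω | X ω = true} * μ {ω | Y ω = true} := by
  have hpre : ∀ Z : Ω → Bool,
      (fun ω => if Z ω then 1 else 0 : Ω → ℕ) ⁻¹' {1} = {ω | Z ω = true} := by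
    intro Z
    ext ω
    cases Z ω <;> simp
  rw [Set.ofPred_and, ← hpre X, ← hpre Y]
  exact h.measure_inter_preimage_eq_mul _ _ (measurableSet_singleton 1) (measurableSet_singleton 1)

lemma ae_eventually_not_both_true {μ : Measure Ω} {X Y : ℕ → Ω → Bool} {r : ℕ → ℝ}
    (hr : Summable fun i => r i ^ 2)
    (hXY : ∀ᶠ i in atTop, IndepFun (fun ω => if X i ω then 1 else 0 : Ω → ℕ)
      (fun ω => if Y i ω then 1 else 0 : Ω → ℕ) μ)
    (hX : ∀ᶠ i in atTop, μ {ω | X i ω = true} = ENNReal.ofReal (r i))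
    (hY : ∀ᶠ i in atTop, μ {ω | Y i ω = true} = ENNReal.ofReal (r i)) :
    ∀ᵐ ω ∂μ, ∀ᶠ i in atTop, ¬(X i ω = true ∧ Y i ω = true) := by
  refine ae_eventually_notMem_of_le_ofReal
    (G := fun i => {ω | X i ω = true ∧ Y i ω = true}) hr ?_
  filter_upwards [hXY, hX, hY] with i hi hXi hYi
  rw [hi.measure_setOf_and_eq_mul, hXi, hYi]
  exact ENNReal.ofReal_mul_self_le (r i)

lemma exists_measurable_tendsto_measure_setOf_eq {μ : Measure Ω} [IsFiniteMeasure μ]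
    {X : ℕ → Ω → ℕ} (hX : ∀ n, Measurable (X n))
    (h : ∀ᵐ ω ∂μ, ∃ c, ∀ᶠ n in atTop, X n ω = c) :
    ∃ θ : Ω → ℕ, Measurable θ ∧
      ∀ k, Tendsto (fun n => μ {ω | X n ω = k}) atTop (𝓝 (μ {ω | θ ω = k})) := by
  refine ⟨fun ω => liminf (fun n => X n ω) atTop, .liminf hX, fun k => ?_⟩
  refine tendsto_measure_of_ae_tendsto_indicator_of_isFiniteMeasure atTop
    (Measurable.liminf hX (measurableSet_singleton k))
    (fun n => hX n (measurableSet_singleton k)) ?_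
  filter_upwards [h] with ω ⟨c, hc⟩
  have hlim : liminf (fun n => X n ω) atTop = c := by rw [liminf_congr hc, liminf_const]
  filter_upwards [hc] with n hn
  simp only [hn, hlim]

end Probability

theorem lca_height_converges_general
    {Ω : Type*} [MeasurableSpace Ω] (μ : Measure Ω) [IsProbabilityMeasure μ]
    (w : ℕ → ℝ)
    (s : ℕ → ℝ)
    (hsum : Summable fun i => (w i / s i) ^ 2)
    (B B' : ℕ → Ω → Bool) (U : ℕ → Ω → ℕ)
    (f : ℕ ⊕ ℕ ⊕ ℕ → Ω → ℕ)
    (hfB : ∀ i, f (Sum.inl i) = fun ω => if B i ω then 1 else 0)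
    (hfB' : ∀ i, f (Sum.inr (Sum.inl i)) = fun ω => if B' i ω then 1 else 0)
    (hindep : iIndepFun f μ)
    (hBlaw : ∀ i, 1 ≤ i → μ {ω | B i ω = true} = ENNReal.ofReal (w i / s i))
    (hB'law : ∀ i, 1 ≤ i → μ {ω | B' i ω = true} = ENNReal.ofReal (w i / s i))
    (hUrange : ∀ m, 1 ≤ m → ∀ ω, 1 ≤ U m ω ∧ U m ω ≤ m)
    (par u v : ℕ → Ω → ℕ)
    (hparmeas : ∀ m, Measurable (par m))
    (humeas : ∀ n, Measurable (u n)) (hvmeas : ∀ n, Measurable (v n))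
    (hpar1 : ∀ ω, par 1 ω = 1)
    (hu1 : ∀ ω, u 1 ω = 1) (hv1 : ∀ ω, v 1 ω = 1)
    (hrec : ∀ ω, ∀ m, 2 ≤ m →
      (B m ω = false → B' m ω = false →
        par m ω = U (m - 1) ω ∧ u m ω = u (m - 1) ω ∧ v m ω = v (m - 1) ω) ∧
      (B m ω = true → B' m ω = false →
        par m ω = u (m - 1) ω ∧ u m ω = m ∧ v m ω = v (m - 1) ω) ∧
      (B m ω = false → B' m ω = true →
        par m ω = v (m - 1) ω ∧ u m ω = u (m - 1) ω ∧ v m ω = m) ∧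
      (B m ω = true → B' m ω = true →
        par m ω = u (m - 1) ω ∧ u m ω = m ∧ v m ω = m))
    -- the height of the last common ancestor of `u n` and `v n`:
    -- (number of common non-strict ancestors) minus one
    (H : ℕ → Ω → ℕ)
    (hH : ∀ n ω, H n ω =
      ((Finset.Icc 1 n).filter (fun i =>
          isAnc (fun m => par m ω) i (u n ω) ∧ isAnc (fun m => par m ω) i (v n ω))).card - 1) :
    ∃ θ : Ω → ℕ, Measurable θ ∧
      ∀ k : ℕ, Tendsto (fun n => μ {ω | H n ω = k}) atTop (𝓝 (μ {ω | θ ω = k})) := by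
  have hpath : ∀ ω, IsTwoNodePath (B · ω) (B' · ω) (U · ω) (par · ω) (u · ω) (v · ω) :=
    fun ω => ⟨fun m hm => hUrange m hm ω, hpar1 ω, hu1 ω, hv1 ω, hrec ω⟩
  have hHcard : ∀ n ω, H n ω = (commonAnc (par · ω) n (u n ω) (v n ω)).card - 1 := hH
  have hHmeas : ∀ n, Measurable (H n) := fun n => by
    rw [funext (hHcard n)]
    exact (measurable_card_commonAnc hparmeas n (humeas n) (hvmeas n)).sub_const 1
  have hfin : ∀ᵐ ω ∂μ, ∀ᶠ m in atTop, ¬(B m ω = true ∧ B' m ω = true) :=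
    ae_eventually_not_both_true (r := fun i => w i / s i) hsum
      (.of_forall fun i => by rw [← hfB, ← hfB']; exact hindep.indepFun (by simp))
      (eventually_atTop.mpr ⟨1, hBlaw⟩) (eventually_atTop.mpr ⟨1, hB'law⟩)
  refine exists_measurable_tendsto_measure_setOf_eq hHmeas ?_
  filter_upwards [hfin] with ω hω
  obtain ⟨c, hc⟩ := (hpath ω).commonAnc_eventually_const hω
  exact ⟨c.card - 1, hc.mono fun n hn => by rw [hHcard, hn]⟩

/-- **Convergence in distribution of the height of the last common ancestor.**
In the two-node coupled construction of the `w`-WRRT with two independent weight-proportional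
nodes `u_n, v_n`, if `∑ (w_i/s_i)² < ∞`, then the height `|u_n ∧ v_n|` of the last common
ancestor of `u_n` and `v_n` converges in distribution, as `n → ∞`, to an (almost surely
finite, i.e. `ℕ`-valued) random variable. -/
theorem lca_height_converges
    {Ω : Type*} [MeasurableSpace Ω] (μ : Measure Ω) [IsProbabilityMeasure μ]
    (w : ℕ → ℝ) (hw : ∀ i, 1 ≤ i → 0 < w i)
    (s : ℕ → ℝ) (hs : ∀ i, s i = ∑ j ∈ Finset.Icc 1 i, w j)
    (hsum : Summable fun i => (w i / s i) ^ 2)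
    (B B' : ℕ → Ω → Bool) (U : ℕ → Ω → ℕ)
    (f : ℕ ⊕ ℕ ⊕ ℕ → Ω → ℕ)
    (hfB : ∀ i, f (Sum.inl i) = fun ω => if B i ω then 1 else 0)
    (hfB' : ∀ i, f (Sum.inr (Sum.inl i)) = fun ω => if B' i ω then 1 else 0)
    (hfU : ∀ i, f (Sum.inr (Sum.inr i)) = U i)
    (hmeas : ∀ j, Measurable (f j))
    (hindep : iIndepFun f μ)
    (hBlaw : ∀ i, 1 ≤ i → μ {ω | B i ω = true} = ENNReal.ofReal (w i / s i))
    (hB'law : ∀ i, 1 ≤ i → μ {ω | B' i ω = true} = ENNReal.ofReal (w i / s i))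
    (hUlaw : ∀ m, 1 ≤ m → ∀ i, 1 ≤ i → i ≤ m →
      μ {ω | U m ω = i} = ENNReal.ofReal (w i / s m))
    (hUrange : ∀ m, 1 ≤ m → ∀ ω, 1 ≤ U m ω ∧ U m ω ≤ m)
    (par u v : ℕ → Ω → ℕ)
    (hparmeas : ∀ m, Measurable (par m))
    (humeas : ∀ n, Measurable (u n)) (hvmeas : ∀ n, Measurable (v n))
    (hpar1 : ∀ ω, par 1 ω = 1)
    (hu1 : ∀ ω, u 1 ω = 1) (hv1 : ∀ ω, v 1 ω = 1)
    (hrec : ∀ ω, ∀ m, 2 ≤ m →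
      (B m ω = false → B' m ω = false →
        par m ω = U (m - 1) ω ∧ u m ω = u (m - 1) ω ∧ v m ω = v (m - 1) ω) ∧
      (B m ω = true → B' m ω = false →
        par m ω = u (m - 1) ω ∧ u m ω = m ∧ v m ω = v (m - 1) ω) ∧
      (B m ω = false → B' m ω = true →
        par m ω = v (m - 1) ω ∧ u m ω = u (m - 1) ω ∧ v m ω = m) ∧
      (B m ω = true → B' m ω = true →
        par m ω = u (m - 1) ω ∧ u m ω = m ∧ v m ω = m))
    -- the height of the last common ancestor of `u n` and `v n`:
    -- (number of common non-strict ancestors) minus one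
    (H : ℕ → Ω → ℕ)
    (hH : ∀ n ω, H n ω =
      ((Finset.Icc 1 n).filter (fun i =>
          isAnc (fun m => par m ω) i (u n ω) ∧ isAnc (fun m => par m ω) i (v n ω))).card - 1) :
    ∃ θ : Ω → ℕ, Measurable θ ∧
      ∀ k : ℕ, Tendsto (fun n => μ {ω | H n ω = k}) atTop (𝓝 (μ {ω | θ ω = k})) :=
  lca_height_converges_general μ w s hsum B B' U f hfB hfB' hindep hBlaw hB'law hUrange par u v
    hparmeas humeas hvmeas hpar1 hu1 hv1 hrec H hH
end
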